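/- arXiv:2308.02701 — 2 statements merged into one kernel-verified Lean document; each statement's English description precedes it below -/
import Mathlib

section
/- Let A be an N×N strongly regular complex lower band matrix of order r. Suppose A = L·R where R is an invertible upper triangular matrix and L is a unit lower triangular matrix whose inverse factors as L⁻¹ = L̃_{N−r+1}·L̃_{N−r}⋯L̃_1 (product in decreasing order of indices), with lower triangular factors L_k ∈ ℂ^{(r+1)×(r+1)} (k = 1,…,N−r) and lower triangular L_{N−r+1} ∈ ℂ^{r×r}. Partition L_k = [[p_L(k), d_L(k)],[a_L(k), q_L(k)]] (blocks of sizes 1×r, 1×1, r×r, r×1). Set x_k = R(k,k), X_k = R(k, k+1:N), and Z_{N−r+1} = R(N−r+1:N, N−r+1:N). Define q(k) = q_L(k) and a(k) = a_L(k) for k = 1,…,N−r; set p(N−r+1) = Z_{N−r+1}⁻¹·L_{N−r+1} and P_{N−r+1} = p(N−r+1); and for k = N−r,…,1 set p(k) = (1/x_k)·(p_L(k) − X_k·P_{k+1}·a(k)) and P_k = (p(k); P_{k+1}·a(k)) (the row p(k) stacked above P_{k+1}·a(k)). Then p(i), q(i), a(i) (i = 1,…,N−r), p(N−r+1) are lower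 Green generators of A⁻¹. -/
open Matrix

noncomputable section

/-- `A(i,j) = 0` whenever `i - j > r` (1-based; identical in 0-based `Fin` indexing). -/
def IsLowerBand (N r : ℕ) (A : Matrix (Fin N) (Fin N) ℂ) : Prop :=
  ∀ i j : Fin N, (j : ℕ) + r < (i : ℕ) → A i j = 0

/-- `A(i,j) = 0` whenever `j - i > r`. -/
def IsUpperBand (N r : ℕ) (A : Matrix (Fin N) (Fin N) ℂ) : Prop :=
  ∀ i j : Fin N, (i : ℕ) + r < (j : ℕ) → A i j = 0

/-- `rank B(k:N, 1:k+r-1) ≤ r` for every `k = 1, …, N-r` (1-based). -/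
def IsLowerGreen (N r : ℕ) (B : Matrix (Fin N) (Fin N) ℂ) : Prop :=
  ∀ (k : ℕ) (hk1 : 1 ≤ k) (hk2 : k ≤ N - r),
    (B.submatrix
      (fun i : Fin (N - k + 1) => (⟨k - 1 + (i : ℕ), by have := i.isLt; omega⟩ : Fin N))
      (fun j : Fin (k + r - 1) => (⟨(j : ℕ), by have := j.isLt; omega⟩ : Fin N))).rank ≤ r

/-- `rank B(1:k+r-1, k:N) ≤ r` for every `k = 1, …, N-r` (1-based). -/
def IsUpperGreen (N r : ℕ) (B : Matrix (Fin N) (Fin N) ℂ) : Prop :=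
  ∀ (k : ℕ) (hk1 : 1 ≤ k) (hk2 : k ≤ N - r),
    (B.submatrix
      (fun i : Fin (k + r - 1) => (⟨(i : ℕ), by have := i.isLt; omega⟩ : Fin N))
      (fun j : Fin (N - k + 1) => (⟨k - 1 + (j : ℕ), by have := j.isLt; omega⟩ : Fin N))).rank ≤ r

/-- `a^>_{i,s} = a(i-1) a(i-2) ⋯ a(s+1)`, equal to `I_r` when `s ≥ i - 1`. -/
def aGT (r : ℕ) (a : ℕ → Matrix (Fin r) (Fin r) ℂ) (i s : ℕ) :
    Matrix (Fin r) (Fin r) ℂ :=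
  (((List.range' (s + 1) (i - 1 - s)).reverse).map a).prod

/-- `p(i) ∈ ℂ^{1×r}` (i = 1,…,N−r), `pLast = p(N−r+1) ∈ ℂ^{r×r}`, `q(j) ∈ ℂ^{r×1}`,
`a(k) ∈ ℂ^{r×r}` are lower Green generators of the `N×N` matrix `B`:
`B(i,1:r) = p(i)·a^>_{i,0}`, `B(i,r+s-1) = p(i)·a^>_{i,s-1}·q(s-1)` for `2 ≤ s ≤ i ≤ N-r`,
and the analogous identities for the last `r` rows `B(N-r+1:N, ·)` with `pLast`. -/
def IsLowerGreenGenerators (N r : ℕ) (hNr : r < N)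
    (p : ℕ → Matrix (Fin 1) (Fin r) ℂ) (q : ℕ → Matrix (Fin r) (Fin 1) ℂ)
    (a : ℕ → Matrix (Fin r) (Fin r) ℂ) (pLast : Matrix (Fin r) (Fin r) ℂ)
    (B : Matrix (Fin N) (Fin N) ℂ) : Prop :=
  (∀ (i : ℕ) (hi1 : 1 ≤ i) (hi2 : i ≤ N - r) (j : Fin r),
      B ⟨i - 1, by omega⟩ ⟨(j : ℕ), by have := j.isLt; omega⟩ = (p i * aGT r a i 0) 0 j)
  ∧ (∀ (i : ℕ) (hi1 : 1 ≤ i) (hi2 : i ≤ N - r) (s : ℕ) (hs1 : 2 ≤ s) (hs2 : s ≤ i),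
      B ⟨i - 1, by omega⟩ ⟨r + s - 2, by omega⟩
        = (p i * aGT r a i (s - 1) * q (s - 1)) 0 0)
  ∧ (∀ (t : Fin r) (j : Fin r),
      B ⟨N - r + (t : ℕ), by have := t.isLt; omega⟩ ⟨(j : ℕ), by have := j.isLt; omega⟩
        = (pLast * aGT r a (N - r + 1) 0) t j)
  ∧ (∀ (t : Fin r) (s : ℕ) (hs1 : 2 ≤ s) (hs2 : s ≤ N - r + 1),
      B ⟨N - r + (t : ℕ), by have := t.isLt; omega⟩ ⟨r + s - 2, by omega⟩
        = (pLast * aGT r a (N - r + 1) (s - 1) * q (s - 1)) t 0)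

/-- The embedded factor `I_{k-1} ⊕ M ⊕ I_{N-k-r}` (1-based block position `k`),
i.e. `M` occupies (1-based) rows and columns `k, …, k+r` of an `N×N` identity. -/
def embed (N r k : ℕ) (M : Matrix (Fin (r + 1)) (Fin (r + 1)) ℂ) :
    Matrix (Fin N) (Fin N) ℂ :=
  Matrix.of fun i j =>
    if h : k - 1 ≤ (i : ℕ) ∧ (i : ℕ) < k + r ∧ k - 1 ≤ (j : ℕ) ∧ (j : ℕ) < k + r then
      M ⟨(i : ℕ) - (k - 1), by omega⟩ ⟨(j : ℕ) - (k - 1), by omega⟩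
    else if (i : ℕ) = (j : ℕ) then 1 else 0

/-- The embedded last factor `I_{N-r} ⊕ M`. -/
def embedLast (N r : ℕ) (M : Matrix (Fin r) (Fin r) ℂ) : Matrix (Fin N) (Fin N) ℂ :=
  Matrix.of fun i j =>
    if h : N - r ≤ (i : ℕ) ∧ N - r ≤ (j : ℕ) then
      M ⟨(i : ℕ) - (N - r), by have := i.isLt; omega⟩
        ⟨(j : ℕ) - (N - r), by have := j.isLt; omega⟩
    else if (i : ℕ) = (j : ℕ) then 1 else 0

/-- `G̃_1 · G̃_2 ⋯ G̃_{N-r}` (increasing order of indices). -/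
def prodAsc (N r : ℕ) (G : ℕ → Matrix (Fin (r + 1)) (Fin (r + 1)) ℂ) :
    Matrix (Fin N) (Fin N) ℂ :=
  ((List.range' 1 (N - r)).map (fun k => embed N r k (G k))).prod

/-- `G̃_{N-r} · G̃_{N-r-1} ⋯ G̃_1` (decreasing order of indices). -/
def prodDesc (N r : ℕ) (G : ℕ → Matrix (Fin (r + 1)) (Fin (r + 1)) ℂ) :
    Matrix (Fin N) (Fin N) ℂ :=
  (((List.range' 1 (N - r)).reverse).map (fun k => embed N r k (G k))).prod

/-- The `1×r` block `p` of the partition `M = [[p, d], [a, q]]`. -/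
def blkP (r : ℕ) (M : Matrix (Fin (r + 1)) (Fin (r + 1)) ℂ) : Matrix (Fin 1) (Fin r) ℂ :=
  Matrix.of fun _ j => M 0 j.castSucc

/-- The `1×1` block `d` of the partition `M = [[p, d], [a, q]]`. -/
def blkD (r : ℕ) (M : Matrix (Fin (r + 1)) (Fin (r + 1)) ℂ) : ℂ := M 0 (Fin.last r)

/-- The `r×r` block `a` of the partition `M = [[p, d], [a, q]]`. -/
def blkA (r : ℕ) (M : Matrix (Fin (r + 1)) (Fin (r + 1)) ℂ) : Matrix (Fin r) (Fin r) ℂ :=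
  Matrix.of fun i j => M i.succ j.castSucc

/-- The `r×1` block `q` of the partition `M = [[p, d], [a, q]]`. -/
def blkQ (r : ℕ) (M : Matrix (Fin (r + 1)) (Fin (r + 1)) ℂ) : Matrix (Fin r) (Fin 1) ℂ :=
  Matrix.of fun i _ => M i.succ (Fin.last r)

/-- Assemble the `(r+1)×(r+1)` matrix `[[p, d], [a, q]]` from its blocks. -/
def mkBlk (r : ℕ) (p : Matrix (Fin 1) (Fin r) ℂ) (d : ℂ)
    (a : Matrix (Fin r) (Fin r) ℂ) (q : Matrix (Fin r) (Fin 1) ℂ) :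
    Matrix (Fin (r + 1)) (Fin (r + 1)) ℂ :=
  Matrix.of fun i j =>
    if hi : (i : ℕ) = 0 then
      if hj : (j : ℕ) < r then p 0 ⟨(j : ℕ), hj⟩ else d
    else
      if hj : (j : ℕ) < r then a ⟨(i : ℕ) - 1, by have := i.isLt; omega⟩ ⟨(j : ℕ), hj⟩
      else q ⟨(i : ℕ) - 1, by have := i.isLt; omega⟩ 0

/-- The elementary Gauss factor `[[1, 0_{1×r}], [-f, I_r]]`. -/
def elemL (r : ℕ) (f : Matrix (Fin r) (Fin 1) ℂ) :
    Matrix (Fin (r + 1)) (Fin (r + 1)) ℂ :=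
  Matrix.of fun i j =>
    if hi : (i : ℕ) = 0 then (if (j : ℕ) = 0 then 1 else 0)
    else if hj : (j : ℕ) = 0 then -f ⟨(i : ℕ) - 1, by have := i.isLt; omega⟩ 0
    else if (i : ℕ) = (j : ℕ) then 1 else 0

/-- The elementary factor `[[I_r, 0_{r×1}], [-g, 1]]`. -/
def elemLrow (r : ℕ) (g : Matrix (Fin 1) (Fin r) ℂ) :
    Matrix (Fin (r + 1)) (Fin (r + 1)) ℂ :=
  Matrix.of fun i j =>
    if hi : (i : ℕ) < r then
      (if hj : (j : ℕ) < r then (if (i : ℕ) = (j : ℕ) then 1 else 0) else 0)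
    else if hj : (j : ℕ) < r then -g 0 ⟨(j : ℕ), hj⟩ else 1

/-- All leading principal minors are nonzero. -/
def StronglyRegular (N : ℕ) (A : Matrix (Fin N) (Fin N) ℂ) : Prop :=
  ∀ (k : ℕ) (hk : k ≤ N), 1 ≤ k →
    (A.submatrix (Fin.castLE hk) (Fin.castLE hk)).det ≠ 0

-- ===================== auxiliary lemmas =====================

lemma aGT_one' (r : ℕ) (a : ℕ → Matrix (Fin r) (Fin r) ℂ) (i s : ℕ) (h : i ≤ s + 1) :
    aGT r a i s = 1 := by
  unfold aGT
  have : i - 1 - s = 0 := by omega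
  simp [this]

lemma aGT_succ' (r : ℕ) (a : ℕ → Matrix (Fin r) (Fin r) ℂ) (k s : ℕ) (h : s < k) :
    aGT r a (k+1) s = a k * aGT r a k s := by
  unfold aGT
  have h1 : k + 1 - 1 - s = (k - 1 - s) + 1 := by omega
  have h2 : s + 1 + 1 * (k - 1 - s) = k := by omega
  rw [h1, List.range'_concat, h2, List.reverse_append]
  simp

/-- The column generator function for the Green structure. -/
def Fg (r : ℕ) (a : ℕ → Matrix (Fin r) (Fin r) ℂ) (q : ℕ → Matrix (Fin r) (Fin 1) ℂ)
    (n : ℕ) (t : Fin r) (j : ℕ) : ℂ :=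
  if h : j < r then (aGT r a (n+1) 0) t ⟨j, h⟩
  else (aGT r a (n+1) (j - r + 1) * q (j - r + 1)) t 0

lemma Fg_zero (r : ℕ) (a : ℕ → Matrix (Fin r) (Fin r) ℂ) (q : ℕ → Matrix (Fin r) (Fin 1) ℂ)
    (t : Fin r) (j : ℕ) (h : j < r) :
    Fg r a q 0 t j = if (t : ℕ) = j then 1 else 0 := by
  simp only [Fg, dif_pos h, aGT_one' r a 1 0 (by omega), Matrix.one_apply, Fin.ext_iff]

lemma Fg_rec (r : ℕ) (a : ℕ → Matrix (Fin r) (Fin r) ℂ) (q : ℕ → Matrix (Fin r) (Fin 1) ℂ)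
    (n : ℕ) (t : Fin r) (j : ℕ) (hj : j < n + r) :
    Fg r a q (n+1) t j = ∑ l : Fin r, a (n+1) t l * Fg r a q n l j := by
  unfold Fg
  by_cases h : j < r
  · rw [dif_pos h]
    simp only [dif_pos h]
    rw [aGT_succ' r a (n+1) 0 (by omega), Matrix.mul_apply]
  · rw [dif_neg h]
    simp only [dif_neg h]
    rw [aGT_succ' r a (n+1) (j - r + 1) (by omega), Matrix.mul_assoc, Matrix.mul_apply]

lemma Fg_last (r : ℕ) (a : ℕ → Matrix (Fin r) (Fin r) ℂ) (q : ℕ → Matrix (Fin r) (Fin 1) ℂ)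
    (n : ℕ) (hn : 1 ≤ n) (t : Fin r) :
    Fg r a q n t (n - 1 + r) = q n t 0 := by
  unfold Fg
  rw [dif_neg (by omega)]
  have h1 : n - 1 + r - r + 1 = n := by omega
  rw [h1, aGT_one' r a (n+1) n (by omega), Matrix.one_mul]

lemma sum_block {N m : ℕ} (b : ℕ) (hb : b + m ≤ N) (f : Fin N → ℂ)
    (hf : ∀ c : Fin N, ((c : ℕ) < b ∨ b + m ≤ (c : ℕ)) → f c = 0) :
    ∑ c, f c = ∑ v : Fin m, f ⟨b + v, by omega⟩ := by
  set g : ℕ → ℂ := fun c => if h : c < N then f ⟨c, h⟩ else 0 with hg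
  have h1 : ∑ c : Fin N, f c = ∑ c ∈ Finset.range N, g c := by
    rw [Finset.sum_range fun i => g i]
    apply Finset.sum_congr rfl
    intro c _
    simp [hg, c.isLt]
  have h2 : ∑ v : Fin m, f ⟨b + v, by omega⟩ = ∑ v ∈ Finset.range m, g (b + v) := by
    rw [Finset.sum_range fun i => g (b + i)]
    apply Finset.sum_congr rfl
    intro v _
    have : b + (v : ℕ) < N := by omega
    simp [hg, this]
  have h3 : ∑ v ∈ Finset.range m, g (b + v) = ∑ c ∈ Finset.Ico b (b + m), g c := by
    rw [Finset.sum_Ico_eq_sum_range]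
    simp
  rw [h1, h2, h3]
  symm
  apply Finset.sum_subset
  · intro c hc
    simp only [Finset.mem_Ico] at hc
    simp only [Finset.mem_range]
    omega
  · intro c hc hc2
    simp only [Finset.mem_range] at hc
    simp only [Finset.mem_Ico, not_and, not_lt] at hc2
    simp only [hg, dif_pos hc]
    apply hf
    rcases le_or_gt b c with h | h
    · right; simpa using hc2 h
    · left; simpa using h

lemma sum_split_head {N : ℕ} (m : ℕ) (hm : m < N) (f : Fin N → ℂ)
    (hf : ∀ c : Fin N, (c : ℕ) < m → f c = 0) :
    ∑ c, f c = f ⟨m, hm⟩ + ∑ u : Fin (N - m - 1), f ⟨m + 1 + u, by omega⟩ := by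
  have h0 : ∑ c, f c = ∑ v : Fin (N - m), f ⟨m + v, by omega⟩ := by
    apply sum_block m (by omega) f
    intro c hc
    apply hf
    rcases hc with h | h
    · exact h
    · omega
  rw [h0]
  set g : ℕ → ℂ := fun c => if h : c < N then f ⟨c, h⟩ else 0 with hg
  have h1 : ∑ v : Fin (N - m), f ⟨m + v, by omega⟩ = ∑ v ∈ Finset.range (N - m), g (m + v) := by
    rw [Finset.sum_range fun i => g (m + i)]
    apply Finset.sum_congr rfl
    intro v _
    have : m + (v : ℕ) < N := by omega
    simp [hg, this]
  have h2 : ∑ u : Fin (N - m - 1), f ⟨m + 1 + u, by omega⟩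
      = ∑ u ∈ Finset.range (N - m - 1), g (m + 1 + u) := by
    rw [Finset.sum_range fun i => g (m + 1 + i)]
    apply Finset.sum_congr rfl
    intro v _
    have : m + 1 + (v : ℕ) < N := by omega
    simp [hg, this]
  rw [h1, h2]
  have h3 : N - m = (N - m - 1) + 1 := by omega
  rw [h3, Finset.sum_range_succ']
  have h4 : f ⟨m, hm⟩ = g m := by simp [hg, hm]
  rw [h4, add_comm]
  congr 1
  apply Finset.sum_congr rfl
  intro u _
  congr 1
  omega

lemma embed_mul_apply_out {N r k : ℕ} (hk : 1 ≤ k) (hkr : k + r ≤ N)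
    (M : Matrix (Fin (r + 1)) (Fin (r + 1)) ℂ) (D : Matrix (Fin N) (Fin N) ℂ)
    (i : Fin N) (hi : (i : ℕ) < k - 1 ∨ k + r ≤ (i : ℕ)) (j : Fin N) :
    (embed N r k M * D) i j = D i j := by
  rw [Matrix.mul_apply]
  have h1 : ∀ c : Fin N, embed N r k M i c = if i = c then 1 else 0 := by
    intro c
    unfold embed
    rw [Matrix.of_apply, dif_neg (by omega)]
    simp [Fin.ext_iff]
  simp only [h1, ite_mul, one_mul, zero_mul]
  simp

lemma embed_mul_apply_in {N r k : ℕ} (hk : 1 ≤ k) (hkr : k + r ≤ N)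
    (M : Matrix (Fin (r + 1)) (Fin (r + 1)) ℂ) (D : Matrix (Fin N) (Fin N) ℂ)
    (i : Fin N) (h1 : k - 1 ≤ (i : ℕ)) (h2 : (i : ℕ) < k + r) (j : Fin N) :
    (embed N r k M * D) i j
      = ∑ v : Fin (r + 1), M ⟨(i : ℕ) - (k - 1), by omega⟩ v
          * D ⟨k - 1 + (v : ℕ), by have := v.isLt; omega⟩ j := by
  rw [Matrix.mul_apply]
  rw [sum_block (m := r + 1) (k - 1) (by omega) _ ?_]
  · apply Finset.sum_congr rfl
    intro v _
    have hv : ∀ (hh : k - 1 + (v:ℕ) < N) (hh2 : (↑i : ℕ) - (k-1) < r + 1),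
        embed N r k M i ⟨k - 1 + (v:ℕ), hh⟩ = M ⟨(↑i : ℕ) - (k - 1), hh2⟩ v := by
      intro hh hh2
      unfold embed
      rw [Matrix.of_apply, dif_pos (by refine ⟨h1, h2, ?_, ?_⟩ <;> simp <;> omega)]
      congr 1 <;> simp [Fin.ext_iff] <;> try omega
    rw [hv _ (by omega)]
  · intro c hc
    have : embed N r k M i c = 0 := by
      unfold embed
      rw [Matrix.of_apply, dif_neg (by omega), if_neg (by omega)]
    rw [this, zero_mul]

lemma embedLast_mul_apply_out {N r : ℕ} (hr : r ≤ N)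
    (M : Matrix (Fin r) (Fin r) ℂ) (D : Matrix (Fin N) (Fin N) ℂ)
    (i : Fin N) (hi : (i : ℕ) < N - r) (j : Fin N) :
    (embedLast N r M * D) i j = D i j := by
  rw [Matrix.mul_apply]
  have h1 : ∀ c : Fin N, embedLast N r M i c = if i = c then 1 else 0 := by
    intro c
    unfold embedLast
    rw [Matrix.of_apply, dif_neg (by omega)]
    simp [Fin.ext_iff]
  simp only [h1, ite_mul, one_mul, zero_mul]
  simp

lemma embedLast_mul_apply_in {N r : ℕ} (hr : r ≤ N)
    (M : Matrix (Fin r) (Fin r) ℂ) (D : Matrix (Fin N) (Fin N) ℂ)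
    (i : Fin N) (h1 : N - r ≤ (i : ℕ)) (j : Fin N) :
    (embedLast N r M * D) i j
      = ∑ l : Fin r, M ⟨(i : ℕ) - (N - r), by have := i.isLt; omega⟩ l
          * D ⟨N - r + (l : ℕ), by have := l.isLt; omega⟩ j := by
  rw [Matrix.mul_apply]
  rw [sum_block (m := r) (N - r) (by omega) _ ?_]
  · apply Finset.sum_congr rfl
    intro v _
    have hv : ∀ (hh : N - r + (v:ℕ) < N) (hh2 : (↑i : ℕ) - (N - r) < r),
        embedLast N r M i ⟨N - r + (v:ℕ), hh⟩ = M ⟨(↑i : ℕ) - (N - r), hh2⟩ v := by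
      intro hh hh2
      unfold embedLast
      rw [Matrix.of_apply, dif_pos (by refine ⟨h1, ?_⟩ <;> simp <;> omega)]
      congr 1 <;> simp [Fin.ext_iff] <;> try omega
    rw [hv _ (by have := i.isLt; omega)]
  · intro c hc
    have : embedLast N r M i c = 0 := by
      unfold embedLast
      rw [Matrix.of_apply, dif_neg (by omega), if_neg (by omega)]
    rw [this, zero_mul]


lemma sum_split_head' {N : ℕ} (k : ℕ) (hk : 1 ≤ k) (hm : k - 1 < N) (f : Fin N → ℂ)
    (hf : ∀ c : Fin N, (c : ℕ) < k - 1 → f c = 0) :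
    ∑ c, f c = f ⟨k - 1, hm⟩ + ∑ u : Fin (N - k), f ⟨k + u, by omega⟩ := by
  rw [sum_split_head (k - 1) hm f hf]
  congr 1
  set g : ℕ → ℂ := fun c => if hc : c < N then f ⟨c, hc⟩ else 0 with hg
  have e1 : ∑ u : Fin (N - (k - 1) - 1), f ⟨k - 1 + 1 + u, by omega⟩
      = ∑ u ∈ Finset.range (N - (k - 1) - 1), g (k - 1 + 1 + u) := by
    rw [Finset.sum_range fun i => g (k - 1 + 1 + i)]
    apply Finset.sum_congr rfl
    intro v _
    have : k - 1 + 1 + (v : ℕ) < N := by omega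
    simp [hg, this]
  have e2 : ∑ u : Fin (N - k), f ⟨k + u, by omega⟩
      = ∑ u ∈ Finset.range (N - k), g (k + u) := by
    rw [Finset.sum_range fun i => g (k + i)]
    apply Finset.sum_congr rfl
    intro v _
    have : k + (v : ℕ) < N := by omega
    simp [hg, this]
  rw [e1, e2, show N - (k - 1) - 1 = N - k from by omega]
  apply Finset.sum_congr rfl
  intro u _
  congr 1
  omega

/-- Partial descending products of embedded factors. -/
def Dmat (N r : ℕ) (Lk : ℕ → Matrix (Fin (r + 1)) (Fin (r + 1)) ℂ) (n : ℕ) :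
    Matrix (Fin N) (Fin N) ℂ :=
  (((List.range' 1 n).reverse).map (fun k => embed N r k (Lk k))).prod

lemma Dmat_zero (N r : ℕ) (Lk : ℕ → Matrix (Fin (r + 1)) (Fin (r + 1)) ℂ) :
    Dmat N r Lk 0 = 1 := by simp [Dmat]

lemma Dmat_succ (N r : ℕ) (Lk : ℕ → Matrix (Fin (r + 1)) (Fin (r + 1)) ℂ) (n : ℕ) :
    Dmat N r Lk (n + 1) = embed N r (n + 1) (Lk (n + 1)) * Dmat N r Lk n := by
  unfold Dmat
  rw [List.range'_concat]
  simp [Nat.add_comm 1 n]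

lemma prodDesc_eq_Dmat (N r : ℕ) (Lk : ℕ → Matrix (Fin (r + 1)) (Fin (r + 1)) ℂ) :
    prodDesc N r Lk = Dmat N r Lk (N - r) := rfl

lemma Dmat_props (N r : ℕ) (hr : 0 < r)
    (Lk : ℕ → Matrix (Fin (r + 1)) (Fin (r + 1)) ℂ) (n : ℕ) (hn : n + r ≤ N) :
    (∀ i j : Fin N, (n + r ≤ (i : ℕ) ∨ n + r ≤ (j : ℕ)) →
      Dmat N r Lk n i j = if (i : ℕ) = (j : ℕ) then 1 else 0)
    ∧ (∀ (t : Fin r) (j : Fin N), (j : ℕ) < n + r → ∀ (h : n + (t : ℕ) < N),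
        Dmat N r Lk n ⟨n + (t : ℕ), h⟩ j
          = Fg r (fun k => blkA r (Lk k)) (fun k => blkQ r (Lk k)) n t (j : ℕ))
    ∧ (∀ i j : Fin N, (i : ℕ) < n → (j : ℕ) < (i : ℕ) + r →
        Dmat N r Lk n i j
          = ∑ t : Fin r, blkP r (Lk ((i : ℕ) + 1)) 0 t
              * Fg r (fun k => blkA r (Lk k)) (fun k => blkQ r (Lk k)) (i : ℕ) t (j : ℕ)) := by
  induction n with
  | zero =>
    refine ⟨?_, ?_, ?_⟩
    · intro i j _
      rw [Dmat_zero, Matrix.one_apply]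
      simp [Fin.ext_iff]
    · intro t j hj h
      rw [Dmat_zero, Matrix.one_apply, Fg_zero r _ _ t (j : ℕ) (by omega)]
      simp [Fin.ext_iff]
    · intro i j hi; omega
  | succ n ih =>
    obtain ⟨ih1, ih2, ih3⟩ := ih (by omega)
    have hk1 : 1 ≤ n + 1 := by omega
    have hkr : n + 1 + r ≤ N := hn
    have hd := Dmat_succ N r Lk n
    refine ⟨?_, ?_, ?_⟩
    · intro i j hij
      rw [hd]
      rcases hij with hi | hj
      · rw [embed_mul_apply_out hk1 hkr _ _ i (by omega) j]
        exact ih1 i j (Or.inl (by omega))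
      · by_cases hi : (i : ℕ) < n ∨ n + 1 + r ≤ (i : ℕ)
        · rw [embed_mul_apply_out hk1 hkr _ _ i (by omega) j]
          rcases hi with h | h
          · rw [ih1 i j (Or.inr (by omega))]
          · rw [ih1 i j (Or.inl (by omega))]
        · push_neg at hi
          rw [embed_mul_apply_in hk1 hkr _ _ i (by omega) (by omega) j]
          rw [if_neg (by omega)]
          apply Finset.sum_eq_zero
          intro v _
          rw [ih1 _ j (Or.inr (by omega))]
          rw [if_neg (by simp only [Fin.val_mk, Fin.val_last, Fin.coe_castSucc]; omega), mul_zero]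
    · intro t j hj h
      rw [hd, embed_mul_apply_in hk1 hkr _ _ _ (by simp only [Fin.val_mk]; omega)
        (by simp only [Fin.val_mk]; omega) j]
      rw [Fin.sum_univ_castSucc]
      have hlast : Dmat N r Lk n ⟨n + 1 - 1 + ((Fin.last r : Fin (r+1)) : ℕ),
          by simp only [Fin.val_last]; omega⟩ j = if n + r = (j : ℕ) then 1 else 0 := by
        rw [ih1 _ j (Or.inl (by simp))]
        simp
      by_cases hcase : (j : ℕ) < n + r
      · rw [Fg_rec r _ _ n t (j : ℕ) hcase]
        have hz : Dmat N r Lk n ⟨n + 1 - 1 + ((Fin.last r : Fin (r+1)) : ℕ),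
            by simp only [Fin.val_last]; omega⟩ j = 0 := by
          rw [hlast, if_neg (by omega)]
        rw [hz, mul_zero, add_zero]
        apply Finset.sum_congr rfl
        intro v _
        have hrow : Dmat N r Lk n ⟨n + 1 - 1 + ((v.castSucc : Fin (r+1)) : ℕ),
            by simp only [Fin.coe_castSucc]; omega⟩ j
            = Fg r (fun k => blkA r (Lk k)) (fun k => blkQ r (Lk k)) n v (j : ℕ) := by
          exact ih2 v j hcase (by omega)
        rw [hrow]
        congr 1
        show Lk (n+1) ⟨↑(⟨n + 1 + (t:ℕ), h⟩ : Fin N) - (n + 1 - 1), _⟩ v.castSucc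
          = blkA r (Lk (n+1)) t v
        unfold blkA
        rw [Matrix.of_apply]
        congr 1 <;> simp [Fin.ext_iff] <;> try omega
      · have hjr : (j : ℕ) = n + r := by omega
        have hz : ∀ v : Fin r,
            Dmat N r Lk n ⟨n + 1 - 1 + ((v.castSucc : Fin (r+1)) : ℕ),
              by simp only [Fin.coe_castSucc]; omega⟩ j = 0 := by
          intro v
          rw [ih1 _ j (Or.inr (by omega)),
            if_neg (by simp only [Fin.val_mk, Fin.coe_castSucc]; omega)]
        have hone : Dmat N r Lk n ⟨n + 1 - 1 + ((Fin.last r : Fin (r+1)) : ℕ),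
            by simp only [Fin.val_last]; omega⟩ j = 1 := by
          rw [hlast, if_pos (by omega)]
        rw [hone, mul_one]
        rw [Finset.sum_eq_zero (fun v _ => by rw [hz v, mul_zero]), zero_add]
        have hfg : Fg r (fun k => blkA r (Lk k)) (fun k => blkQ r (Lk k)) (n+1) t (j : ℕ)
            = blkQ r (Lk (n+1)) t 0 := by
          rw [hjr, show n + r = (n + 1) - 1 + r by omega]
          exact Fg_last r _ _ (n+1) (by omega) t
        rw [hfg]
        unfold blkQ
        rw [Matrix.of_apply]
        congr 1 <;> simp [Fin.ext_iff] <;> try omega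
    · intro i j hi hj
      rw [hd]
      by_cases hcase : (i : ℕ) < n
      · rw [embed_mul_apply_out hk1 hkr _ _ i (by omega) j]
        exact ih3 i j hcase hj
      · have hieq : (i : ℕ) = n := by omega
        rw [embed_mul_apply_in hk1 hkr _ _ i (by omega) (by omega) j]
        rw [Fin.sum_univ_castSucc]
        have hz : Dmat N r Lk n ⟨n + 1 - 1 + ((Fin.last r : Fin (r+1)) : ℕ),
            by simp only [Fin.val_last]; omega⟩ j = 0 := by
          rw [ih1 _ j (Or.inl (by simp)),
            if_neg (by simp only [Fin.val_mk, Fin.val_last]; omega)]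
        rw [hz, mul_zero, add_zero]
        apply Finset.sum_congr rfl
        intro v _
        have hrow : Dmat N r Lk n ⟨n + 1 - 1 + ((v.castSucc : Fin (r+1)) : ℕ),
            by simp only [Fin.coe_castSucc]; omega⟩ j
            = Fg r (fun k => blkA r (Lk k)) (fun k => blkQ r (Lk k)) n v (j : ℕ) := by
          exact ih2 v j (by omega) (by omega)
        rw [hrow]
        congr 1
        · have h0 : (⟨(i : ℕ) - (n + 1 - 1), by omega⟩ : Fin (r + 1)) = (0 : Fin (r + 1)) := by
            simp [Fin.ext_iff]; omega
          rw [h0, hieq]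
          rfl
        · rw [hieq]

/-- **LU-based inversion of a lower band matrix.** If the strongly regular lower band
matrix `A` factors as `A = L·R` with `R` invertible upper triangular and `L` unit lower
triangular with `L⁻¹ = L̃_{N-r+1}·L̃_{N-r}⋯L̃_1` (lower triangular factors), then the data
`q(k) = q_L(k)`, `a(k) = a_L(k)` (blocks of `L_k`),
`p(N-r+1) = P_{N-r+1} = (R(N-r+1:N, N-r+1:N))⁻¹·L_{N-r+1}` and, recursively downwards,
`p(k) = (1/x_k)·(p_L(k) − X_k·P_{k+1}·a(k))`, `P_k = (p(k); P_{k+1}·a(k))`,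
yield lower Green generators of `A⁻¹`. -/
theorem lu_inversion_lowerBand (N r : ℕ) (hr : 0 < r) (hNr : r < N)
    (A : Matrix (Fin N) (Fin N) ℂ) (hsr : StronglyRegular N A)
    (hband : IsLowerBand N r A)
    (L R : Matrix (Fin N) (Fin N) ℂ)
    (hLtri : ∀ i j : Fin N, (i : ℕ) < (j : ℕ) → L i j = 0)
    (hLdiag : ∀ i : Fin N, L i i = 1)
    (hR : IsUnit R)
    (hRtri : ∀ i j : Fin N, (j : ℕ) < (i : ℕ) → R i j = 0)
    (hALR : A = L * R)
    (Lk : ℕ → Matrix (Fin (r + 1)) (Fin (r + 1)) ℂ) (Llast : Matrix (Fin r) (Fin r) ℂ)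
    (hLkTri : ∀ (k : ℕ), 1 ≤ k → k ≤ N - r →
      ∀ i j : Fin (r + 1), (i : ℕ) < (j : ℕ) → Lk k i j = 0)
    (hLlastTri : ∀ i j : Fin r, (i : ℕ) < (j : ℕ) → Llast i j = 0)
    (hfac : L⁻¹ = embedLast N r Llast * prodDesc N r Lk)
    -- the matrices `P_k` (of size `(N-k+1)×r`), encoded by their rows
    (P : ℕ → ℕ → Fin r → ℂ)
    (hPtop : ∀ (t : Fin r) (j : Fin r),
      P (N - r + 1) (t : ℕ) j
        = (((Matrix.of fun i j : Fin r =>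
              R ⟨N - r + (i : ℕ), by have := i.isLt; omega⟩
                ⟨N - r + (j : ℕ), by have := j.isLt; omega⟩)⁻¹) * Llast) t j)
    (p : ℕ → Matrix (Fin 1) (Fin r) ℂ)
    (hp : ∀ (k : ℕ) (hk1 : 1 ≤ k) (hk2 : k ≤ N - r) (j : Fin r),
      p k 0 j = (1 / R ⟨k - 1, by omega⟩ ⟨k - 1, by omega⟩)
        * (blkP r (Lk k) 0 j
            - ∑ t : Fin (N - k), ∑ l : Fin r,
                R ⟨k - 1, by omega⟩ ⟨k + (t : ℕ), by have := t.isLt; omega⟩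
                  * P (k + 1) (t : ℕ) l * blkA r (Lk k) l j))
    (hPfirst : ∀ (k : ℕ) (hk1 : 1 ≤ k) (hk2 : k ≤ N - r) (j : Fin r),
      P k 0 j = p k 0 j)
    (hPrec : ∀ (k : ℕ) (hk1 : 1 ≤ k) (hk2 : k ≤ N - r) (t : ℕ) (j : Fin r),
      P k (t + 1) j = ∑ l : Fin r, P (k + 1) t l * blkA r (Lk k) l j) :
    IsLowerGreenGenerators N r hNr p (fun k => blkQ r (Lk k)) (fun k => blkA r (Lk k))
      (Matrix.of fun i j : Fin r => P (N - r + 1) (i : ℕ) j) A⁻¹ := by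
  classical
  have hrN : r ≤ N := le_of_lt hNr
  have hdetR : IsUnit R.det := (Matrix.isUnit_iff_isUnit_det R).mp hR
  have hRRinv : R * R⁻¹ = 1 := Matrix.mul_nonsing_inv R hdetR
  have hRdiag : ∀ i : Fin N, R i i ≠ 0 := by
    intro i
    have hdet : R.det = ∏ i, R i i := Matrix.det_of_upperTriangular hRtri
    intro h0
    apply hdetR.ne_zero
    rw [hdet]
    exact Finset.prod_eq_zero (Finset.mem_univ i) h0
  have hBdef : R * A⁻¹ = embedLast N r Llast * Dmat N r Lk (N - r) := by
    rw [hALR, Matrix.mul_inv_rev, ← Matrix.mul_assoc, hRRinv, Matrix.one_mul, hfac,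
      prodDesc_eq_Dmat]
  have hRB : ∀ i j : Fin N, ∑ c, R i c * A⁻¹ c j
      = (embedLast N r Llast * Dmat N r Lk (N - r)) i j := by
    intro i j
    rw [← Matrix.mul_apply, hBdef]
  obtain ⟨hD1, hD2, hD3⟩ := Dmat_props N r hr Lk (N - r) (by omega)
  have hM1 : ∀ (i j : Fin N), (i : ℕ) < N - r → (j : ℕ) < (i : ℕ) + r →
      (embedLast N r Llast * Dmat N r Lk (N - r)) i j
        = ∑ t : Fin r, blkP r (Lk ((i : ℕ) + 1)) 0 t
            * Fg r (fun k => blkA r (Lk k)) (fun k => blkQ r (Lk k)) (i : ℕ) t (j : ℕ) := by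
    intro i j hi hj
    rw [embedLast_mul_apply_out hrN _ _ i hi j]
    exact hD3 i j hi hj
  have hM2 : ∀ (t : Fin r) (j : Fin N) (h : N - r + (t : ℕ) < N),
      (embedLast N r Llast * Dmat N r Lk (N - r)) ⟨N - r + (t : ℕ), h⟩ j
        = ∑ l : Fin r, Llast t l
            * Fg r (fun k => blkA r (Lk k)) (fun k => blkQ r (Lk k)) (N - r) l (j : ℕ) := by
    intro t j h
    rw [embedLast_mul_apply_in hrN _ _ _ (by simp only [Fin.val_mk]; omega) j]
    apply Finset.sum_congr rfl
    intro l _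
    rw [hD2 l j (by omega) (by omega)]
    congr 2
    simp [Fin.ext_iff]
  set Z : Matrix (Fin r) (Fin r) ℂ := Matrix.of fun i j : Fin r =>
      R ⟨N - r + (i : ℕ), by have := i.isLt; omega⟩
        ⟨N - r + (j : ℕ), by have := j.isLt; omega⟩ with hZ
  have hZtri : ∀ i j : Fin r, (j : ℕ) < (i : ℕ) → Z i j = 0 := by
    intro i j hij
    exact hRtri _ _ (by simp only [Fin.val_mk]; omega)
  have hZdet : IsUnit Z.det := by
    rw [Matrix.det_of_upperTriangular hZtri]
    apply isUnit_iff_ne_zero.mpr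
    apply Finset.prod_ne_zero_iff.mpr
    intro i _
    exact hRdiag _
  have hZinv : Z⁻¹ * Z = 1 := Matrix.nonsing_inv_mul Z hZdet
  have base : ∀ (t : ℕ) (htr : t < r) (j : Fin N) (h : N - r + t < N),
      A⁻¹ ⟨N - r + t, h⟩ j
        = ∑ l : Fin r, P (N - r + 1) t l
            * Fg r (fun k => blkA r (Lk k)) (fun k => blkQ r (Lk k)) (N - r) l (j : ℕ) := by
    intro t htr j h
    have expand : ∀ l : Fin r, P (N - r + 1) t l = ∑ m : Fin r, Z⁻¹ ⟨t, htr⟩ m * Llast m l := by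
      intro l
      have h1 := hPtop ⟨t, htr⟩ l
      rw [Matrix.mul_apply] at h1
      exact h1
    have step1 : ∑ l : Fin r, P (N - r + 1) t l * (fun (l : Fin r) (jj : ℕ) => Fg r (fun k => blkA r (Lk k)) (fun k => blkQ r (Lk k)) (N - r) l jj) l (j : ℕ)
        = ∑ m : Fin r, Z⁻¹ ⟨t, htr⟩ m
            * ∑ u : Fin r, Z m u * A⁻¹ ⟨N - r + (u : ℕ), by have := u.isLt; omega⟩ j := by
      calc ∑ l : Fin r, P (N - r + 1) t l * (fun (l : Fin r) (jj : ℕ) => Fg r (fun k => blkA r (Lk k)) (fun k => blkQ r (Lk k)) (N - r) l jj) l (j : ℕ)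
          = ∑ l : Fin r, ∑ m : Fin r, Z⁻¹ ⟨t, htr⟩ m * (Llast m l * (fun (l : Fin r) (jj : ℕ) => Fg r (fun k => blkA r (Lk k)) (fun k => blkQ r (Lk k)) (N - r) l jj) l (j : ℕ)) := by
            apply Finset.sum_congr rfl
            intro l _
            rw [expand l, Finset.sum_mul]
            apply Finset.sum_congr rfl
            intro m _
            ring
        _ = ∑ m : Fin r, ∑ l : Fin r, Z⁻¹ ⟨t, htr⟩ m * (Llast m l * (fun (l : Fin r) (jj : ℕ) => Fg r (fun k => blkA r (Lk k)) (fun k => blkQ r (Lk k)) (N - r) l jj) l (j : ℕ)) :=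
            Finset.sum_comm
        _ = ∑ m : Fin r, Z⁻¹ ⟨t, htr⟩ m * ∑ l : Fin r, Llast m l * (fun (l : Fin r) (jj : ℕ) => Fg r (fun k => blkA r (Lk k)) (fun k => blkQ r (Lk k)) (N - r) l jj) l (j : ℕ) := by
            apply Finset.sum_congr rfl
            intro m _
            rw [Finset.mul_sum]
        _ = ∑ m : Fin r, Z⁻¹ ⟨t, htr⟩ m
              * ∑ u : Fin r, Z m u * A⁻¹ ⟨N - r + (u : ℕ), by have := u.isLt; omega⟩ j := by
            apply Finset.sum_congr rfl
            intro m _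
            congr 1
            rw [← hM2 m j (by omega), ← hRB]
            rw [sum_block (m := r) (N - r) (by omega) _ ?_]
            · apply Finset.sum_congr rfl
              intro u _
              rfl
            · intro c hc
              rcases hc with hc | hc
              · rw [hRtri _ _ (by simp only [Fin.val_mk]; omega), zero_mul]
              · exact absurd c.isLt (by omega)
    rw [step1]
    symm
    calc ∑ m : Fin r, Z⁻¹ ⟨t, htr⟩ m
            * ∑ u : Fin r, Z m u * A⁻¹ ⟨N - r + (u : ℕ), by have := u.isLt; omega⟩ j
        = ∑ u : Fin r, (∑ m : Fin r, Z⁻¹ ⟨t, htr⟩ m * Z m u)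
            * A⁻¹ ⟨N - r + (u : ℕ), by have := u.isLt; omega⟩ j := by
          simp only [Finset.mul_sum, Finset.sum_mul]
          rw [Finset.sum_comm]
          apply Finset.sum_congr rfl
          intro u _
          apply Finset.sum_congr rfl
          intro m _
          ring
      _ = A⁻¹ ⟨N - r + t, h⟩ j := by
          have hid : ∀ u : Fin r, (∑ m : Fin r, Z⁻¹ ⟨t, htr⟩ m * Z m u)
              = if (⟨t, htr⟩ : Fin r) = u then 1 else 0 := by
            intro u
            rw [← Matrix.mul_apply, hZinv, Matrix.one_apply]
          simp only [hid, ite_mul, one_mul, zero_mul]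
          rw [Finset.sum_ite_eq]
          simp

  have main : ∀ d k, k = N - r + 1 - d → 1 ≤ k → k ≤ N - r + 1 →
      ∀ (t : ℕ) (ht : k - 1 + t < N) (j : Fin N), (j : ℕ) < k - 1 + r →
      A⁻¹ ⟨k - 1 + t, ht⟩ j
        = ∑ l : Fin r, P k t l
            * Fg r (fun k => blkA r (Lk k)) (fun k => blkQ r (Lk k)) (k - 1) l (j : ℕ) := by
    intro d
    induction d with
    | zero =>
      intro k hk hk1 hk2 t ht j hj
      have hkeq : k = N - r + 1 := by omega
      subst hkeq
      exact base t (by omega) j (by omega)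
    | succ d ih =>
      intro k hk hk1 hk2 t ht j hj
      have hkNr : k ≤ N - r := by omega
      have hk1' : k + 1 = N - r + 1 - d := by omega
      have hrec : ∀ w : Fin r, (fun (n : ℕ) (w : Fin r) (jj : ℕ) => Fg r (fun k => blkA r (Lk k)) (fun k => blkQ r (Lk k)) n w jj) k w (j : ℕ)
          = ∑ l : Fin r, blkA r (Lk k) w l * (fun (n : ℕ) (w : Fin r) (jj : ℕ) => Fg r (fun k => blkA r (Lk k)) (fun k => blkQ r (Lk k)) n w jj) (k - 1) l (j : ℕ) := by
        intro w
        have h0 := Fg_rec r (fun k => blkA r (Lk k)) (fun k => blkQ r (Lk k)) (k - 1) w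
          (j : ℕ) (by omega)
        rw [show k - 1 + 1 = k from by omega] at h0
        exact h0
      cases t with
      | succ t' =>
        have hih : A⁻¹ ⟨k + t', by omega⟩ j = ∑ l : Fin r, P (k + 1) t' l * (fun (n : ℕ) (w : Fin r) (jj : ℕ) => Fg r (fun k => blkA r (Lk k)) (fun k => blkQ r (Lk k)) n w jj) k l (j : ℕ) :=
          ih (k + 1) hk1' (by omega) (by omega) t' (by omega) j (by omega)
        rw [show (⟨k - 1 + (t' + 1), ht⟩ : Fin N) = ⟨k + t', by omega⟩ from by
          simp only [Fin.mk.injEq]; omega]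
        rw [hih]
        calc ∑ l : Fin r, P (k + 1) t' l * (fun (n : ℕ) (w : Fin r) (jj : ℕ) => Fg r (fun k => blkA r (Lk k)) (fun k => blkQ r (Lk k)) n w jj) k l (j : ℕ)
            = ∑ l : Fin r, ∑ w : Fin r,
                P (k + 1) t' l * (blkA r (Lk k) l w * (fun (n : ℕ) (w : Fin r) (jj : ℕ) => Fg r (fun k => blkA r (Lk k)) (fun k => blkQ r (Lk k)) n w jj) (k - 1) w (j : ℕ)) := by
              apply Finset.sum_congr rfl
              intro l _
              rw [hrec l, Finset.mul_sum]
          _ = ∑ w : Fin r, ∑ l : Fin r,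
                P (k + 1) t' l * (blkA r (Lk k) l w * (fun (n : ℕ) (w : Fin r) (jj : ℕ) => Fg r (fun k => blkA r (Lk k)) (fun k => blkQ r (Lk k)) n w jj) (k - 1) w (j : ℕ)) :=
              Finset.sum_comm
          _ = ∑ w : Fin r, P k (t' + 1) w * (fun (n : ℕ) (w : Fin r) (jj : ℕ) => Fg r (fun k => blkA r (Lk k)) (fun k => blkQ r (Lk k)) n w jj) (k - 1) w (j : ℕ) := by
              apply Finset.sum_congr rfl
              intro w _
              rw [hPrec k hk1 hkNr t' w, Finset.sum_mul]
              apply Finset.sum_congr rfl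
              intro l _
              ring
      | zero =>
        have hxne : R ⟨k - 1, by omega⟩ ⟨k - 1, by omega⟩ ≠ 0 := hRdiag _
        have hrows : ∀ u : Fin (N - k), A⁻¹ ⟨k + (u : ℕ), by have := u.isLt; omega⟩ j
            = ∑ l : Fin r, P (k + 1) (u : ℕ) l * (fun (n : ℕ) (w : Fin r) (jj : ℕ) => Fg r (fun k => blkA r (Lk k)) (fun k => blkQ r (Lk k)) n w jj) k l (j : ℕ) := by
          intro u
          exact ih (k + 1) hk1' (by omega) (by omega) (u : ℕ) (by omega) j (by omega)
        have hMrow : (embedLast N r Llast * Dmat N r Lk (N - r)) ⟨k - 1, by omega⟩ j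
            = ∑ w : Fin r, blkP r (Lk k) 0 w * (fun (n : ℕ) (w : Fin r) (jj : ℕ) => Fg r (fun k => blkA r (Lk k)) (fun k => blkQ r (Lk k)) n w jj) (k - 1) w (j : ℕ) := by
          have h0 := hM1 ⟨k - 1, by omega⟩ j (by simp only [Fin.val_mk]; omega)
            (by simp only [Fin.val_mk]; omega)
          simp only [Fin.val_mk] at h0
          rw [show k - 1 + 1 = k from by omega] at h0
          exact h0
        have hsplit : R ⟨k - 1, by omega⟩ ⟨k - 1, by omega⟩ * A⁻¹ ⟨k - 1, by omega⟩ j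
            + ∑ u : Fin (N - k), R ⟨k - 1, by omega⟩ ⟨k + (u : ℕ), by have := u.isLt; omega⟩
                * A⁻¹ ⟨k + (u : ℕ), by have := u.isLt; omega⟩ j
            = (embedLast N r Llast * Dmat N r Lk (N - r)) ⟨k - 1, by omega⟩ j := by
          have hs := sum_split_head' (N := N) k hk1 (show k - 1 < N by omega)
            (fun c => R ⟨k - 1, by omega⟩ c * A⁻¹ c j)
            (fun c hc => by
              show R ⟨k - 1, by omega⟩ c * A⁻¹ c j = 0
              rw [hRtri _ _ (by simp only [Fin.val_mk]; omega), zero_mul])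
          rw [← hRB ⟨k - 1, by omega⟩ j, hs]
        have hxP : ∀ l : Fin r, R ⟨k - 1, by omega⟩ ⟨k - 1, by omega⟩ * P k 0 l
            = blkP r (Lk k) 0 l - ∑ t : Fin (N - k), ∑ w : Fin r,
                R ⟨k - 1, by omega⟩ ⟨k + (t : ℕ), by have := t.isLt; omega⟩
                  * P (k + 1) (t : ℕ) w * blkA r (Lk k) w l := by
          intro l
          rw [hPfirst k hk1 hkNr l, hp k hk1 hkNr l, one_div, ← mul_assoc,
            mul_inv_cancel₀ hxne, one_mul]
        have hswap : ∑ u : Fin (N - k),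
              R ⟨k - 1, by omega⟩ ⟨k + (u : ℕ), by have := u.isLt; omega⟩
                * A⁻¹ ⟨k + (u : ℕ), by have := u.isLt; omega⟩ j
            = ∑ l : Fin r, (∑ u : Fin (N - k), ∑ w : Fin r,
                R ⟨k - 1, by omega⟩ ⟨k + (u : ℕ), by have := u.isLt; omega⟩
                  * P (k + 1) (u : ℕ) w * blkA r (Lk k) w l)
                * (fun (n : ℕ) (w : Fin r) (jj : ℕ) => Fg r (fun k => blkA r (Lk k)) (fun k => blkQ r (Lk k)) n w jj) (k - 1) l (j : ℕ) := by
          have e1 : ∑ u : Fin (N - k),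
                R ⟨k - 1, by omega⟩ ⟨k + (u : ℕ), by have := u.isLt; omega⟩
                  * A⁻¹ ⟨k + (u : ℕ), by have := u.isLt; omega⟩ j
              = ∑ u : Fin (N - k), ∑ w : Fin r, ∑ l : Fin r,
                  R ⟨k - 1, by omega⟩ ⟨k + (u : ℕ), by have := u.isLt; omega⟩
                    * P (k + 1) (u : ℕ) w * blkA r (Lk k) w l * (fun (n : ℕ) (w : Fin r) (jj : ℕ) => Fg r (fun k => blkA r (Lk k)) (fun k => blkQ r (Lk k)) n w jj) (k - 1) l (j : ℕ) := by
            apply Finset.sum_congr rfl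
            intro u _
            rw [hrows u, Finset.mul_sum]
            apply Finset.sum_congr rfl
            intro w _
            rw [hrec w, Finset.mul_sum, Finset.mul_sum]
            apply Finset.sum_congr rfl
            intro l _
            ring
          rw [e1]
          refine Eq.trans (Finset.sum_congr rfl (fun u _ => Finset.sum_comm)) ?_
          refine Eq.trans Finset.sum_comm ?_
          apply Finset.sum_congr rfl
          intro l _
          rw [Finset.sum_mul]
          apply Finset.sum_congr rfl
          intro u _
          rw [Finset.sum_mul]
        have key : R ⟨k - 1, by omega⟩ ⟨k - 1, by omega⟩ * A⁻¹ ⟨k - 1, by omega⟩ j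
            = R ⟨k - 1, by omega⟩ ⟨k - 1, by omega⟩
                * ∑ l : Fin r, P k 0 l * (fun (n : ℕ) (w : Fin r) (jj : ℕ) => Fg r (fun k => blkA r (Lk k)) (fun k => blkQ r (Lk k)) n w jj) (k - 1) l (j : ℕ) := by
          rw [eq_sub_of_add_eq hsplit, hMrow, Finset.mul_sum]
          have rhs1 : ∀ l : Fin r, R ⟨k - 1, by omega⟩ ⟨k - 1, by omega⟩
                * (P k 0 l * (fun (n : ℕ) (w : Fin r) (jj : ℕ) => Fg r (fun k => blkA r (Lk k)) (fun k => blkQ r (Lk k)) n w jj) (k - 1) l (j : ℕ))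
              = (blkP r (Lk k) 0 l - ∑ t : Fin (N - k), ∑ w : Fin r,
                  R ⟨k - 1, by omega⟩ ⟨k + (t : ℕ), by have := t.isLt; omega⟩
                    * P (k + 1) (t : ℕ) w * blkA r (Lk k) w l)
                  * (fun (n : ℕ) (w : Fin r) (jj : ℕ) => Fg r (fun k => blkA r (Lk k)) (fun k => blkQ r (Lk k)) n w jj) (k - 1) l (j : ℕ) := by
            intro l
            rw [← mul_assoc, hxP l]
          rw [Finset.sum_congr rfl (fun l _ => rhs1 l)]
          simp only [sub_mul]
          rw [Finset.sum_sub_distrib]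
          congr 1
        exact mul_left_cancel₀ hxne key

  refine ⟨?_, ?_, ?_, ?_⟩
  · intro i hi1 hi2 j
    have h := main (N - r + 1 - i) i (by omega) hi1 (by omega) 0 (by omega)
      ⟨(j : ℕ), by omega⟩ (by simp only [Fin.val_mk]; omega)
    simp only [Nat.add_zero] at h
    rw [h, Matrix.mul_apply]
    apply Finset.sum_congr rfl
    intro l _
    rw [hPfirst i hi1 hi2 l]
    congr 1
    unfold Fg
    rw [dif_pos (by simpa using j.isLt)]
    congr 2 <;> first | omega | simp | (simp [Fin.ext_iff]; omega)
  · intro i hi1 hi2 s hs1 hs2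
    have h := main (N - r + 1 - i) i (by omega) hi1 (by omega) 0 (by omega)
      ⟨r + s - 2, by omega⟩ (by simp only [Fin.val_mk]; omega)
    simp only [Nat.add_zero] at h
    rw [h, Matrix.mul_assoc, Matrix.mul_apply]
    apply Finset.sum_congr rfl
    intro l _
    rw [hPfirst i hi1 hi2 l]
    congr 1
    unfold Fg
    rw [dif_neg (by simp only [Fin.mk_lt_mk, Fin.val_mk, not_lt] <;> omega)]
    have e1 : (↑(⟨r + s - 2, by omega⟩ : Fin N) : ℕ) - r + 1 = s - 1 := by
      simp only [Fin.val_mk]; omega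
    rw [e1]
    congr 2 <;> first | omega | simp | (simp [Fin.ext_iff]; omega)
  · intro t j
    have h := base (t : ℕ) t.isLt ⟨(j : ℕ), by omega⟩ (by omega)
    rw [h, Matrix.mul_apply]
    apply Finset.sum_congr rfl
    intro l _
    congr 1
    unfold Fg
    rw [dif_pos (by simpa using j.isLt)]
  · intro t s hs1 hs2
    have h := base (t : ℕ) t.isLt ⟨r + s - 2, by omega⟩ (by omega)
    rw [h, Matrix.mul_assoc, Matrix.mul_apply]
    apply Finset.sum_congr rfl
    intro l _
    congr 1
    unfold Fg
    rw [dif_neg (by simp only [Fin.val_mk]; omega)]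
    have e1 : (↑(⟨r + s - 2, by omega⟩ : Fin N) : ℕ) - r + 1 = s - 1 := by
      simp only [Fin.val_mk]; omega
    rw [e1]
end
end

section
/- Let A be an N×N strongly regular complex matrix with A(i,j) = 0 whenever |i−j| > r (a two-sided band matrix of order r). Then A admits a factorization A = L·R, where L is a unit lower triangular matrix which is lower band of order r and whose inverse factors as L⁻¹ = L̃_{N−r+1}·L̃_{N−r}⋯L̃_1 (product in decreasing order of indices) with embedded factors built from L_k = [[1, 0_{1×r}],[−f_k, I_r]] ∈ ℂ^{(r+1)×(r+1)} for some columns f_k ∈ ℂ^{r×1} (k = 1,…,N−r) and a unit lower triangular L_{N−r+1} ∈ ℂ^{r×r}, and where R is an upper triangular matrix satisfying R(i,j) = 0 whenever j − i > r. -/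
open Matrix

noncomputable section

/-!
Gaussian elimination without pivoting. Step `c` subtracts multiples of row `c` from rows
`c+1, …, c+r`; it is left multiplication by `1 - C_c`, where the `bandColumn` `C_c` carries the
multipliers in column `c`, and `1 - C_c` is exactly the embedded factor `L̃_{c+1}`. These unit
lower triangular factors keep all leading principal minors, so every pivot is nonzero. The band
survives each step because the pivot row has no entries beyond column `c + r` and, by the earlier
steps, none before column `c`. Since `C_c * C_d = 0` for `c ≤ d`, the inverse of the product of
the factors is `1 + ∑ C_c`, a unit lower triangular band matrix. The last `r` factors only act on
the trailing `r × r` block and combine into `L_{N-r+1}`.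
-/

namespace Matrix

variable {m n R : Type*}

section UnitLowerTriangular

variable [Fintype n] [LinearOrder n] [Semiring R]

lemma IsLowerTriangular.mul_apply_self {M M' : Matrix n n R} (hM : M.IsLowerTriangular)
    (hM' : M'.IsLowerTriangular) (i : n) : (M * M') i i = M i i * M' i i := by
  rw [mul_apply, Finset.sum_eq_single i]
  · intro l _ hl
    rcases hl.lt_or_gt with hl | hl
    · rw [hM' hl, mul_zero]
    · rw [hM hl, zero_mul]
  · simp

variable (n R) in
def unitLowerTriangular : Submonoid (Matrix n n R) where
  carrier := {M | M.IsLowerTriangular ∧ ∀ i, M i i = 1}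
  mul_mem' {M M'} hM hM' :=
    ⟨hM.1.mul hM'.1, fun i => by rw [hM.1.mul_apply_self hM'.1, hM.2, hM'.2, one_mul]⟩
  one_mem' := ⟨blockTriangular_one, one_apply_eq⟩

lemma submatrix_mem_unitLowerTriangular [Fintype m] [LinearOrder m] {M : Matrix n n R}
    (hM : M ∈ unitLowerTriangular n R) {f : m → n} (hf : StrictMono f) :
    M.submatrix f f ∈ unitLowerTriangular m R :=
  ⟨fun _ _ hij => hM.1 (hf hij), fun i => hM.2 (f i)⟩

lemma IsLowerTriangular.submatrix_castLE_mul {N k : ℕ} (hk : k ≤ N)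
    {E : Matrix (Fin N) (Fin N) R} (hE : E.IsLowerTriangular) (S : Matrix (Fin N) (Fin N) R) :
    (E * S).submatrix (Fin.castLE hk) (Fin.castLE hk) =
      E.submatrix (Fin.castLE hk) (Fin.castLE hk) *
        S.submatrix (Fin.castLE hk) (Fin.castLE hk) := by
  ext i j
  refine (Fintype.sum_of_injective _ (Fin.castLE_injective hk) _ _ (fun l hl => ?_)
    fun _ => rfl).symm
  have hkl : k ≤ (l : ℕ) := by
    by_contra! h
    exact hl ⟨⟨l, h⟩, rfl⟩
  have hil : Fin.castLE hk i < l := Fin.lt_def.mpr (by simp; omega)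
  exact mul_eq_zero_of_left (hE (OrderDual.toDual_lt_toDual.mpr hil)) _

end UnitLowerTriangular

section IdentityOutside

variable [Fintype n] [DecidableEq n] [NonAssocSemiring R]

variable (R) in
def identityOutside (s : Set n) : Submonoid (Matrix n n R) where
  carrier := {M | ∀ i j, (i ∉ s ∨ j ∉ s) → M i j = (1 : Matrix n n R) i j}
  mul_mem' {M M'} hM hM' i j hij := by
    rcases hij with hi | hj
    · have hrow : M i = (1 : Matrix n n R) i := funext fun l => hM i l (Or.inl hi)
      have : (M * M') i j = ((1 : Matrix n n R) * M') i j := by simp only [mul_apply, hrow]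
      rw [this, one_mul]
      exact hM' i j (Or.inl hi)
    · have hcol : ∀ l, M' l j = (1 : Matrix n n R) l j := fun l => hM' l j (Or.inr hj)
      have : (M * M') i j = (M * (1 : Matrix n n R)) i j := by simp only [mul_apply, hcol]
      rw [this, mul_one]
      exact hM i j (Or.inr hj)
  one_mem' _ _ _ := rfl

end IdentityOutside

end Matrix

lemma StronglyRegular.unitLowerTriangular_mul {N : ℕ} {E S : Matrix (Fin N) (Fin N) ℂ}
    (hE : E ∈ Matrix.unitLowerTriangular (Fin N) ℂ) (hS : StronglyRegular N S) :
    StronglyRegular N (E * S) := by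
  intro k hk hk1
  have hEk : E.submatrix (Fin.castLE hk) (Fin.castLE hk) ∈
      Matrix.unitLowerTriangular (Fin k) ℂ :=
    Matrix.submatrix_mem_unitLowerTriangular hE (Fin.strictMono_castLE hk)
  rw [hE.1.submatrix_castLE_mul, Matrix.det_mul, Matrix.det_of_isLowerTriangular _ hEk.1,
    Finset.prod_eq_one fun i _ => hEk.2 i, one_mul]
  exact hS k hk hk1

lemma StronglyRegular.apply_self_ne_zero {N : ℕ} {S : Matrix (Fin N) (Fin N) ℂ}
    (hS : StronglyRegular N S) {c : ℕ} (hc : c < N)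
    (hcleared : ∀ i j : Fin N, j < i → (j : ℕ) < c → S i j = 0) :
    S ⟨c, hc⟩ ⟨c, hc⟩ ≠ 0 := by
  have hdet := hS (c + 1) hc (by omega)
  have hupper : (S.submatrix (Fin.castLE hc) (Fin.castLE hc)).IsUpperTriangular :=
    fun i j hij => hcleared _ _ hij (by have := Fin.lt_def.mp hij; have := i.isLt; simp at *; omega)
  rw [Matrix.det_of_isUpperTriangular hupper] at hdet
  exact Finset.prod_ne_zero_iff.mp hdet (Fin.last c) (Finset.mem_univ _)

def bandColumn (N r c : ℕ) (v : Matrix (Fin r) (Fin 1) ℂ) : Matrix (Fin N) (Fin N) ℂ :=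
  Matrix.of fun i j =>
    if h : (j : ℕ) = c ∧ c < (i : ℕ) ∧ (i : ℕ) ≤ c + r then v ⟨(i : ℕ) - c - 1, by omega⟩ 0
    else 0

section BandColumn

variable {N r c : ℕ}

lemma bandColumn_apply_eq_zero (v : Matrix (Fin r) (Fin 1) ℂ) {i j : Fin N}
    (h : ¬((j : ℕ) = c ∧ c < (i : ℕ) ∧ (i : ℕ) ≤ c + r)) : bandColumn N r c v i j = 0 :=
  dif_neg h

lemma embed_elemL_eq (c : ℕ) (f : Matrix (Fin r) (Fin 1) ℂ) :
    embed N r (c + 1) (elemL r f) = 1 - bandColumn N r c f := by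
  ext i j
  simp only [embed, elemL, bandColumn, of_apply, Matrix.sub_apply, one_apply, Fin.ext_iff,
    Nat.add_sub_cancel]
  split_ifs <;> (try simp) <;> omega

lemma bandColumn_mul_apply (v : Matrix (Fin r) (Fin 1) ℂ) (S : Matrix (Fin N) (Fin N) ℂ)
    (i j : Fin N) :
    (bandColumn N r c v * S) i j =
      if h : c < (i : ℕ) ∧ (i : ℕ) ≤ c + r then
        v ⟨(i : ℕ) - c - 1, by omega⟩ 0 * S ⟨c, by have := i.isLt; omega⟩ j
      else 0 := by
  rw [mul_apply]
  split_ifs with h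
  · rw [Finset.sum_eq_single ⟨c, by have := i.isLt; omega⟩]
    · simp [bandColumn, h]
    · intro l _ hl
      rw [bandColumn_apply_eq_zero v fun h' => hl (Fin.ext h'.1), zero_mul]
    · simp
  · exact Finset.sum_eq_zero fun l _ => by rw [bandColumn_apply_eq_zero v (by tauto), zero_mul]

lemma bandColumn_mul_bandColumn {d : ℕ} (hcd : c ≤ d) (v w : Matrix (Fin r) (Fin 1) ℂ) :
    bandColumn N r c v * bandColumn N r d w = 0 := by
  ext i j
  rw [bandColumn_mul_apply, Matrix.zero_apply]
  split_ifs
  · rw [bandColumn_apply_eq_zero w (by simp; omega), mul_zero]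
  · rfl

lemma one_add_bandColumn_mul_one_sub (v : Matrix (Fin r) (Fin 1) ℂ) :
    (1 + bandColumn N r c v) * (1 - bandColumn N r c v) = 1 := by
  simp [add_mul, mul_sub, bandColumn_mul_bandColumn le_rfl]

lemma one_sub_bandColumn_mem_unitLowerTriangular (v : Matrix (Fin r) (Fin 1) ℂ) :
    1 - bandColumn N r c v ∈ unitLowerTriangular (Fin N) ℂ := by
  refine ⟨fun i j hij => ?_, fun i => ?_⟩
  · have hij : (i : ℕ) < j := hij
    rw [Matrix.sub_apply, one_apply_ne (by omega), bandColumn_apply_eq_zero v (by omega), sub_zero]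
  · rw [Matrix.sub_apply, one_apply_eq, bandColumn_apply_eq_zero v (by omega), sub_zero]

lemma one_sub_bandColumn_mem_identityOutside {b : ℕ} (hbc : b ≤ c)
    (v : Matrix (Fin r) (Fin 1) ℂ) :
    1 - bandColumn N r c v ∈ identityOutside ℂ {i : Fin N | b ≤ (i : ℕ)} := by
  intro i j hij
  simp only [Set.mem_ofPred_eq, not_le] at hij
  rw [Matrix.sub_apply, bandColumn_apply_eq_zero v (by omega), sub_zero]

end BandColumn

-- Entries past the last row are junk; `bandColumn` never reads them.
def pivotMultipliers (N r : ℕ) (S : Matrix (Fin N) (Fin N) ℂ) (c : ℕ) :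
    Matrix (Fin r) (Fin 1) ℂ :=
  Matrix.of fun t _ =>
    if h : c + 1 + (t : ℕ) < N then
      S ⟨c + 1 + t, h⟩ ⟨c, by omega⟩ / S ⟨c, by omega⟩ ⟨c, by omega⟩
    else 0

def gaussStep (N r : ℕ) (S : Matrix (Fin N) (Fin N) ℂ) (c : ℕ) : Matrix (Fin N) (Fin N) ℂ :=
  (1 - bandColumn N r c (pivotMultipliers N r S c)) * S

lemma gaussStep_apply {N r c : ℕ} (hc : c < N) (S : Matrix (Fin N) (Fin N) ℂ) (i j : Fin N) :
    gaussStep N r S c i j = S i j -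
      if c < (i : ℕ) ∧ (i : ℕ) ≤ c + r then S i ⟨c, hc⟩ / S ⟨c, hc⟩ ⟨c, hc⟩ * S ⟨c, hc⟩ j
      else 0 := by
  rw [gaussStep, sub_mul, one_mul, Matrix.sub_apply, bandColumn_mul_apply]
  split_ifs with h
  · have hi : c + 1 + ((i : ℕ) - c - 1) < N := by have := i.isLt; omega
    simp only [pivotMultipliers, of_apply, dif_pos hi]
    congr 4
    ext
    simp
    omega
  · rfl

structure GaussInvariant (N r c : ℕ) (S : Matrix (Fin N) (Fin N) ℂ) : Prop where
  cleared : ∀ i j : Fin N, j < i → (j : ℕ) < c → S i j = 0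
  lowerBand : IsLowerBand N r S
  upperBand : IsUpperBand N r S
  stronglyRegular : StronglyRegular N S

lemma GaussInvariant.gaussStep {N r c : ℕ} {S : Matrix (Fin N) (Fin N) ℂ}
    (h : GaussInvariant N r c S) (hc : c < N) :
    GaussInvariant N r (c + 1) (gaussStep N r S c) := by
  set p : Fin N := ⟨c, hc⟩
  have hpivot : S p p ≠ 0 := h.stronglyRegular.apply_self_ne_zero hc h.cleared
  have hrow : ∀ j : Fin N, (j : ℕ) < c → S p j = 0 := fun j hj => h.cleared p j hj hj
  refine ⟨fun i j hji hjc => ?_, fun i j hij => ?_, fun i j hij => ?_,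
    h.stronglyRegular.unitLowerTriangular_mul (one_sub_bandColumn_mem_unitLowerTriangular _)⟩
  · rw [gaussStep_apply hc]
    rcases (Nat.lt_succ_iff.mp hjc).lt_or_eq with hjc | hjc
    · rw [h.cleared i j hji hjc, hrow j hjc]
      simp
    · obtain rfl : j = p := Fin.ext hjc
      split_ifs with hi
      · rw [div_mul_cancel₀ _ hpivot, sub_self]
      · have hci : c < (i : ℕ) := hji
        rw [h.lowerBand i p (by simp only [p]; omega), sub_zero]
  · rw [gaussStep_apply hc, h.lowerBand i j hij]
    split_ifs
    · rw [hrow j (by omega)]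
      simp
    · simp
  · rw [gaussStep_apply hc, h.upperBand i j hij]
    split_ifs
    · rw [h.upperBand p j (by simp [p]; omega)]
      simp
    · simp

def gaussElim (N r : ℕ) (A : Matrix (Fin N) (Fin N) ℂ) : ℕ → Matrix (Fin N) (Fin N) ℂ
  | 0 => A
  | c + 1 => gaussStep N r (gaussElim N r A c) c

lemma gaussInvariant_gaussElim {N r : ℕ} {A : Matrix (Fin N) (Fin N) ℂ}
    (hA : GaussInvariant N r 0 A) : ∀ c ≤ N, GaussInvariant N r c (gaussElim N r A c)
  | 0, _ => hA
  | c + 1, hc => (gaussInvariant_gaussElim hA c (by omega)).gaussStep (by omega)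

def gaussMultipliers (N r : ℕ) (A : Matrix (Fin N) (Fin N) ℂ) (c : ℕ) :
    Matrix (Fin r) (Fin 1) ℂ :=
  pivotMultipliers N r (gaussElim N r A c) c

def eliminationMatrix (N r : ℕ) (A : Matrix (Fin N) (Fin N) ℂ) (m : ℕ) :
    Matrix (Fin N) (Fin N) ℂ :=
  (((List.range' 1 m).reverse).map
    fun k => embed N r k (elemL r (gaussMultipliers N r A (k - 1)))).prod

def multiplierMatrix (N r : ℕ) (A : Matrix (Fin N) (Fin N) ℂ) (m : ℕ) :
    Matrix (Fin N) (Fin N) ℂ :=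
  1 + ∑ c ∈ Finset.range m, bandColumn N r c (gaussMultipliers N r A c)

section Factors

variable {N : ℕ} (r : ℕ) (A : Matrix (Fin N) (Fin N) ℂ)

lemma eliminationMatrix_succ (m : ℕ) :
    eliminationMatrix N r A (m + 1)
      = (1 - bandColumn N r m (gaussMultipliers N r A m)) * eliminationMatrix N r A m := by
  simp [eliminationMatrix, List.range'_concat, add_comm 1 m, embed_elemL_eq]

lemma eliminationMatrix_mul (m : ℕ) : eliminationMatrix N r A m * A = gaussElim N r A m := by
  induction m with
  | zero => simp [eliminationMatrix, gaussElim]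
  | succ m ih => rw [eliminationMatrix_succ, mul_assoc, ih]; rfl

lemma multiplierMatrix_succ (m : ℕ) :
    multiplierMatrix N r A (m + 1)
      = multiplierMatrix N r A m * (1 + bandColumn N r m (gaussMultipliers N r A m)) := by
  have hprod : (∑ c ∈ Finset.range m, bandColumn N r c (gaussMultipliers N r A c))
      * bandColumn N r m (gaussMultipliers N r A m) = 0 := by
    rw [Finset.sum_mul]
    exact Finset.sum_eq_zero fun c hc =>
      bandColumn_mul_bandColumn (Finset.mem_range.mp hc).le _ _
  rw [multiplierMatrix, multiplierMatrix, Finset.sum_range_succ, mul_add, mul_one, add_mul,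
    one_mul, hprod, add_zero, add_assoc]

lemma multiplierMatrix_mul_eliminationMatrix (m : ℕ) :
    multiplierMatrix N r A m * eliminationMatrix N r A m = 1 := by
  induction m with
  | zero => simp [multiplierMatrix, eliminationMatrix]
  | succ m ih =>
    rw [multiplierMatrix_succ, eliminationMatrix_succ, mul_assoc, ← mul_assoc (1 + _),
      one_add_bandColumn_mul_one_sub, one_mul, ih]

lemma multiplierMatrix_apply_outside_band {m : ℕ} {i j : Fin N}
    (h : ¬((j : ℕ) < i ∧ (i : ℕ) ≤ j + r)) :
    multiplierMatrix N r A m i j = (1 : Matrix (Fin N) (Fin N) ℂ) i j := by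
  simp only [multiplierMatrix, Matrix.add_apply, Matrix.sum_apply]
  rw [Finset.sum_eq_zero fun c _ => bandColumn_apply_eq_zero _ (by omega), add_zero]

end Factors

lemma embedLast_submatrix {N r : ℕ} (hrN : r ≤ N) {Z : Matrix (Fin N) (Fin N) ℂ}
    (hZ : Z ∈ identityOutside ℂ {i : Fin N | N - r ≤ (i : ℕ)}) :
    embedLast N r (Z.submatrix (fun i => ⟨N - r + i, by omega⟩) fun j => ⟨N - r + j, by omega⟩)
      = Z := by
  ext i j
  simp only [embedLast, of_apply, submatrix_apply]
  split_ifs with h hij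
  · congr <;> omega
  · obtain rfl := Fin.ext hij
    rw [hZ i i (by simp only [Set.mem_ofPred_eq]; omega), one_apply_eq]
  · rw [hZ i j (by simp only [Set.mem_ofPred_eq]; omega),
      one_apply_ne (mt Fin.val_eq_of_eq hij)]

lemma exists_eliminationMatrix_eq_embedLast_mul {N r : ℕ} (hrN : r ≤ N)
    (A : Matrix (Fin N) (Fin N) ℂ) :
    ∃ Llast ∈ unitLowerTriangular (Fin r) ℂ, eliminationMatrix N r A N
      = embedLast N r Llast * prodDesc N r fun k => elemL r (gaussMultipliers N r A (k - 1)) := by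
  set Z := (((List.range' (1 + (N - r)) r).reverse).map
    fun k => embed N r k (elemL r (gaussMultipliers N r A (k - 1)))).prod
  have hZ : Z ∈ unitLowerTriangular (Fin N) ℂ ⊓
      identityOutside ℂ {i : Fin N | N - r ≤ (i : ℕ)} := by
    refine Submonoid.list_prod_mem _ fun M hM => ?_
    obtain ⟨k, hk, rfl⟩ := List.mem_map.mp hM
    rw [List.mem_reverse, List.mem_range'_1] at hk
    obtain ⟨c, rfl⟩ : ∃ c, k = c + 1 := ⟨k - 1, by omega⟩
    rw [Nat.add_sub_cancel, embed_elemL_eq]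
    exact ⟨one_sub_bandColumn_mem_unitLowerTriangular _,
      one_sub_bandColumn_mem_identityOutside (by omega) _⟩
  refine ⟨Z.submatrix (fun i => ⟨N - r + i, by omega⟩) (fun j => ⟨N - r + j, by omega⟩),
    submatrix_mem_unitLowerTriangular hZ.1 fun a b hab => ?_, ?_⟩
  · simp only [Fin.lt_def] at hab ⊢
    omega
  have hsplit : List.range' 1 N = List.range' 1 (N - r) ++ List.range' (1 + (N - r)) r := by
    rw [List.range'_append_1, Nat.sub_add_cancel hrN]
  rw [embedLast_submatrix hrN hZ.2, eliminationMatrix, hsplit, List.reverse_append,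
    List.map_append, List.prod_append]
  rfl

theorem stronglyRegular_twoSidedBand_lu_general (N r : ℕ) (hNr : r < N)
    (A : Matrix (Fin N) (Fin N) ℂ) (hsr : StronglyRegular N A)
    (hband : ∀ i j : Fin N, ((j : ℕ) + r < (i : ℕ) ∨ (i : ℕ) + r < (j : ℕ)) → A i j = 0) :
    ∃ (L R : Matrix (Fin N) (Fin N) ℂ)
      (f : ℕ → Matrix (Fin r) (Fin 1) ℂ) (Llast : Matrix (Fin r) (Fin r) ℂ),
      A = L * R ∧
      (∀ i j : Fin N, (i : ℕ) < (j : ℕ) → L i j = 0) ∧ (∀ i : Fin N, L i i = 1) ∧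
      IsLowerBand N r L ∧
      (∀ i j : Fin r, (i : ℕ) < (j : ℕ) → Llast i j = 0) ∧ (∀ i : Fin r, Llast i i = 1) ∧
      L⁻¹ = embedLast N r Llast * prodDesc N r (fun k => elemL r (f k)) ∧
      (∀ i j : Fin N, (j : ℕ) < (i : ℕ) → R i j = 0) ∧
      (∀ i j : Fin N, (i : ℕ) + r < (j : ℕ) → R i j = 0) := by
  have hA : GaussInvariant N r 0 A :=
    ⟨fun _ _ _ h => absurd h (Nat.not_lt_zero _), fun i j h => hband i j (Or.inl h),
      fun i j h => hband i j (Or.inr h), hsr⟩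
  have hR := gaussInvariant_gaussElim hA N le_rfl
  have hLE := multiplierMatrix_mul_eliminationMatrix r A N
  obtain ⟨Llast, hLlast, hE⟩ := exists_eliminationMatrix_eq_embedLast_mul hNr.le A
  refine ⟨multiplierMatrix N r A N, gaussElim N r A N, fun k => gaussMultipliers N r A (k - 1),
    Llast, ?_, fun i j hij => ?_, fun i => ?_, fun i j hij => ?_, fun i j hij => hLlast.1 hij,
    hLlast.2, ?_, fun i j hij => hR.cleared i j hij j.isLt, hR.upperBand⟩
  · rw [← eliminationMatrix_mul, ← mul_assoc, hLE, one_mul]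
  · rw [multiplierMatrix_apply_outside_band r A (by omega), one_apply_ne (by omega)]
  · rw [multiplierMatrix_apply_outside_band r A (by omega), one_apply_eq]
  · rw [multiplierMatrix_apply_outside_band r A (by omega), one_apply_ne (by omega)]
  · rw [Matrix.inv_eq_right_inv hLE, hE]

/-- Every strongly regular two-sided band matrix `A` of order `r` admits a factorization
`A = L·R` with `L` unit lower triangular and lower band of order `r`, whose inverse
factors as `L⁻¹ = L̃_{N-r+1}·L̃_{N-r}⋯L̃_1` with elementary factors
`L_k = [[1, 0], [-f_k, I_r]]` and a unit lower triangular `L_{N-r+1}`, and with `R`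
upper triangular and upper band of order `r`. -/
theorem stronglyRegular_twoSidedBand_lu (N r : ℕ) (hr : 0 < r) (hNr : r < N)
    (A : Matrix (Fin N) (Fin N) ℂ) (hsr : StronglyRegular N A)
    (hband : ∀ i j : Fin N, ((j : ℕ) + r < (i : ℕ) ∨ (i : ℕ) + r < (j : ℕ)) → A i j = 0) :
    ∃ (L R : Matrix (Fin N) (Fin N) ℂ)
      (f : ℕ → Matrix (Fin r) (Fin 1) ℂ) (Llast : Matrix (Fin r) (Fin r) ℂ),
      A = L * R ∧
      (∀ i j : Fin N, (i : ℕ) < (j : ℕ) → L i j = 0) ∧ (∀ i : Fin N, L i i = 1) ∧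
      IsLowerBand N r L ∧
      (∀ i j : Fin r, (i : ℕ) < (j : ℕ) → Llast i j = 0) ∧ (∀ i : Fin r, Llast i i = 1) ∧
      L⁻¹ = embedLast N r Llast * prodDesc N r (fun k => elemL r (f k)) ∧
      (∀ i j : Fin N, (j : ℕ) < (i : ℕ) → R i j = 0) ∧
      (∀ i j : Fin N, (i : ℕ) + r < (j : ℕ) → R i j = 0) :=
  stronglyRegular_twoSidedBand_lu_general N r hNr A hsr hband
end
end
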